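/- Let x, x′, y, y′, a, b be points of the hyperbolic plane ℍ such that a is the midpoint of x and x′ (dist x a = dist a x′ = (1/2)·dist x x′), b is the midpoint of y and y′, and dist x a = dist y b. Suppose that for every λ ∈ [0,1] and all points x_λ, y_λ ∈ ℍ with dist x x_λ = λ·dist x a, dist x_λ a = (1 − λ)·dist x a, dist y y_λ = λ·dist y b, and dist y_λ b = (1 − λ)·dist y b, one has dist a b ≤ dist x_λ y_λ. Then dist x′ y′ ≤ dist x y. -/

import Mathlib

/-!
In the hyperboloid model, where `cosh (dist z w)` is the Minkowski product of the images of `z`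
and `w`, the point at parameter `λ` on the segment `[x, a]` of length `d` is
`(sinh ((1 - λ) d) • x + sinh (λ d) • a) / sinh d`, and the reflection of `x` in its midpoint `a`
is `x' = 2 cosh d • a - x`. Minimality of `dist a b` among the `dist xλ yλ`, in the limit
`λ → 1`, gives the first-variation inequality `2 cosh d ⟪a, b⟫ ≤ ⟪x, b⟫ + ⟪a, y⟫`. Expanding
`⟪x', y'⟫ = ⟪x, y⟫ - 2 cosh d (⟪x, b⟫ + ⟪a, y⟫ - 2 cosh d ⟪a, b⟫)` then gives
`cosh (dist x' y') ≤ cosh (dist x y)`.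
-/

open Real UpperHalfPlane

lemma Real.sinh_sq_sub_sinh_sq (x y : ℝ) :
    sinh x ^ 2 - sinh y ^ 2 = sinh (x + y) * sinh (x - y) := by
  rw [sinh_add, sinh_sub]
  linear_combination (-sinh x ^ 2) * cosh_sq y + (sinh y ^ 2) * cosh_sq x

lemma two_mul_cosh_mul_le_of_forall_sinh_sq_mul_le {d P M N : ℝ} (hd : 0 < d)
    (h : ∀ l ∈ Set.Ico (0 : ℝ) 1, N * sinh d ^ 2 ≤ sinh ((1 - l) * d) ^ 2 * P
      + sinh ((1 - l) * d) * sinh (l * d) * M + sinh (l * d) ^ 2 * N) :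
    2 * cosh d * N ≤ M := by
  -- Dividing by `sinh ((1 - l) * d)`, via `sinh d ^ 2 - sinh (l * d) ^ 2`
  -- `= sinh ((1 + l) * d) * sinh ((1 - l) * d)`, leaves a function continuous at `l = 1`.
  set G : ℝ → ℝ := fun l => sinh ((1 - l) * d) * P + sinh (l * d) * M - sinh ((1 + l) * d) * N
  have hG : Set.Ico (0 : ℝ) 1 ⊆ {l | 0 ≤ G l} := by
    intro l hl
    have hp : 0 < sinh ((1 - l) * d) := sinh_pos_iff.mpr (mul_pos (sub_pos.mpr hl.2) hd)
    have hsq := sinh_sq_sub_sinh_sq d (l * d)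
    rw [show d + l * d = (1 + l) * d by ring, show d - l * d = (1 - l) * d by ring] at hsq
    have : 0 ≤ sinh ((1 - l) * d) * G l := by
      simp only [G]
      linear_combination h l hl - N * hsq
    exact nonneg_of_mul_nonneg_right this hp
  have hG1 : 0 ≤ G 1 := by
    have hclosed : IsClosed {l | 0 ≤ G l} := isClosed_le continuous_const (by fun_prop)
    refine hclosed.closure_subset_iff.mpr hG ?_
    rw [closure_Ico zero_ne_one]
    exact Set.right_mem_Icc.mpr zero_le_one
  simp only [G, sub_self, zero_mul, sinh_zero, one_mul, show (1 + 1) * d = 2 * d by ring,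
    sinh_two_mul] at hG1
  nlinarith [sinh_pos_iff.mpr hd]

def minkowski : LinearMap.BilinForm ℝ (Fin 3 → ℝ) :=
  LinearMap.mk₂ ℝ (fun u v => u 0 * v 0 - u 1 * v 1 - u 2 * v 2)
    (fun _ _ _ => by simp only [Pi.add_apply]; ring)
    (fun _ _ _ => by simp only [Pi.smul_apply, smul_eq_mul]; ring)
    (fun _ _ _ => by simp only [Pi.add_apply]; ring)
    (fun _ _ _ => by simp only [Pi.smul_apply, smul_eq_mul]; ring)

lemma minkowski_apply (u v : Fin 3 → ℝ) :
    minkowski u v = u 0 * v 0 - u 1 * v 1 - u 2 * v 2 := rfl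

lemma minkowski_comm (u v : Fin 3 → ℝ) : minkowski u v = minkowski v u := by
  simp only [minkowski_apply]
  ring

lemma eq_zero_of_minkowski_eq_zero_of_self_pos {u w : Fin 3 → ℝ} (hu : 0 < minkowski u u)
    (hwu : minkowski w u = 0) (hw : 0 ≤ minkowski w w) : w = 0 := by
  rw [minkowski_apply] at hu hwu hw
  have hu0 : u 0 ≠ 0 := by
    rintro h
    rw [h] at hu
    nlinarith [sq_nonneg (u 1), sq_nonneg (u 2)]
  have hidentity : (w 1 ^ 2 + w 2 ^ 2) * (u 0 * u 0 - u 1 * u 1 - u 2 * u 2)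
      + (w 1 * u 2 - w 2 * u 1) ^ 2 = -u 0 ^ 2 * (w 0 * w 0 - w 1 * w 1 - w 2 * w 2) := by
    have : w 0 * u 0 = w 1 * u 1 + w 2 * u 2 := by linarith
    linear_combination (w 0 * u 0 + w 1 * u 1 + w 2 * u 2) * this
  have h12 : w 1 ^ 2 + w 2 ^ 2 = 0 := by
    nlinarith [sq_nonneg (w 1), sq_nonneg (w 2), sq_nonneg (w 1 * u 2 - w 2 * u 1),
      mul_nonneg (sq_nonneg (u 0)) hw]
  have h1 : w 1 = 0 := by nlinarith [sq_nonneg (w 1), sq_nonneg (w 2)]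
  have h2 : w 2 = 0 := by nlinarith [sq_nonneg (w 1), sq_nonneg (w 2)]
  have h0 : w 0 = 0 := by
    rw [h1, h2] at hwu
    simpa [hu0] using hwu
  ext i
  fin_cases i <;> assumption

namespace UpperHalfPlane

/-- The standard isometry of `ℍ` onto the upper sheet `{v | minkowski v v = 1 ∧ 0 < v 0}` of the
hyperboloid. -/
noncomputable def toHyperboloid (z : ℍ) : Fin 3 → ℝ :=
  ![(z.re ^ 2 + z.im ^ 2 + 1) / (2 * z.im), (z.re ^ 2 + z.im ^ 2 - 1) / (2 * z.im), z.re / z.im]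

lemma cosh_dist_eq_minkowski (z w : ℍ) :
    cosh (dist z w) = minkowski (toHyperboloid z) (toHyperboloid w) := by
  have hz := z.im_pos
  have hw := w.im_pos
  rw [cosh_dist, Complex.dist_eq_re_im, sq_sqrt (by positivity)]
  simp only [minkowski_apply, toHyperboloid, coe_re, coe_im, Matrix.cons_val]
  field_simp
  ring

lemma minkowski_toHyperboloid_self (z : ℍ) :
    minkowski (toHyperboloid z) (toHyperboloid z) = 1 := by
  rw [← cosh_dist_eq_minkowski, dist_self, cosh_zero]

lemma toHyperboloid_zero_pos (z : ℍ) : 0 < toHyperboloid z 0 := by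
  have := z.im_pos
  simp only [toHyperboloid, Matrix.cons_val_zero]
  positivity

lemma exists_toHyperboloid_eq {v : Fin 3 → ℝ} (hv : minkowski v v = 1) (hv0 : 0 < v 0) :
    ∃ z : ℍ, toHyperboloid z = v := by
  rw [minkowski_apply] at hv
  have hpos : 0 < v 0 - v 1 := by nlinarith [sq_nonneg (v 2), sq_nonneg (v 0 + v 1)]
  refine ⟨⟨⟨v 2 / (v 0 - v 1), 1 / (v 0 - v 1)⟩, by simpa using hpos⟩, ?_⟩
  ext i
  fin_cases i <;>
    simp only [toHyperboloid, re, im, Fin.zero_eta, Fin.mk_one, Fin.reduceFinMk, Matrix.cons_val,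
      Matrix.cons_val_zero, Matrix.cons_val_one] <;>
    field_simp <;>
    linear_combination -hv

lemma dist_eq_of_cosh_dist_eq {z w : ℍ} {r : ℝ} (hr : 0 ≤ r) (h : cosh (dist z w) = cosh r) :
    dist z w = r :=
  cosh_injOn dist_nonneg hr h

lemma toHyperboloid_eq_of_midpoint {z a w : ℍ} (h1 : dist z a = dist a w)
    (h2 : dist z w = 2 * dist z a) :
    toHyperboloid w = (2 * cosh (dist z a)) • toHyperboloid a - toHyperboloid z := by
  set Z := toHyperboloid z
  set A := toHyperboloid a
  set W := toHyperboloid w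
  set D := cosh (dist z a)
  have hZA : minkowski Z A = D := (cosh_dist_eq_minkowski z a).symm
  have hAW : minkowski A W = D := by rw [← cosh_dist_eq_minkowski, ← h1]
  have hZW : minkowski Z W = 2 * D ^ 2 - 1 := by
    rw [← cosh_dist_eq_minkowski, h2, cosh_two_mul, cosh_sq]
    ring
  have hZZ : minkowski Z Z = 1 := minkowski_toHyperboloid_self z
  have hAA : minkowski A A = 1 := minkowski_toHyperboloid_self a
  have hWW : minkowski W W = 1 := minkowski_toHyperboloid_self w
  have hAZ := minkowski_comm A Z
  have hWA := minkowski_comm W A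
  have hWZ := minkowski_comm W Z
  rw [← sub_eq_zero]
  refine eq_zero_of_minkowski_eq_zero_of_self_pos (u := A) (by rw [hAA]; norm_num) ?_
    (le_of_eq ?_)
  · simp only [map_sub, map_smul, LinearMap.sub_apply, LinearMap.smul_apply, smul_eq_mul,
      hWA, hAW, hAA, hZA]
    ring
  · simp only [map_sub, map_smul, LinearMap.sub_apply, LinearMap.smul_apply, smul_eq_mul,
      hWA, hWZ, hAZ, hAW, hZW, hZA, hAA, hZZ, hWW]
    ring

lemma exists_toHyperboloid_eq_geodesic {x a : ℍ} (hxa : x ≠ a) {l : ℝ}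
    (hl : l ∈ Set.Icc (0 : ℝ) 1) :
    ∃ z : ℍ, dist x z = l * dist x a ∧ dist z a = (1 - l) * dist x a ∧
      toHyperboloid z = (sinh (dist x a))⁻¹ •
        (sinh ((1 - l) * dist x a) • toHyperboloid x + sinh (l * dist x a) • toHyperboloid a) := by
  set d := dist x a
  set s := l * d
  set t := (1 - l) * d
  have hs : 0 ≤ s := mul_nonneg hl.1 dist_nonneg
  have ht : 0 ≤ t := mul_nonneg (sub_nonneg.mpr hl.2) dist_nonneg
  have hst : s + t = d := by ring
  have hS : 0 < sinh d := sinh_pos_iff.mpr (dist_pos.mpr hxa)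
  set X := toHyperboloid x
  set A := toHyperboloid a
  set v := (sinh d)⁻¹ • (sinh t • X + sinh s • A)
  have hXX : minkowski X X = 1 := minkowski_toHyperboloid_self x
  have hAA : minkowski A A = 1 := minkowski_toHyperboloid_self a
  have hXA : minkowski X A = cosh d := (cosh_dist_eq_minkowski x a).symm
  have hAX : minkowski A X = cosh d := by rw [minkowski_comm, hXA]
  have hvX : minkowski v X = cosh s := by
    simp only [v, map_smul, map_add, LinearMap.smul_apply, LinearMap.add_apply, smul_eq_mul,
      hXX, hAX]
    rw [inv_mul_eq_iff_eq_mul₀ hS.ne', ← hst, sinh_add, cosh_add]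
    linear_combination (-sinh t) * cosh_sq s
  have hvA : minkowski v A = cosh t := by
    simp only [v, map_smul, map_add, LinearMap.smul_apply, LinearMap.add_apply, smul_eq_mul,
      hXA, hAA]
    rw [inv_mul_eq_iff_eq_mul₀ hS.ne', ← hst, sinh_add, cosh_add]
    linear_combination (-sinh s) * cosh_sq t
  have hvv : minkowski v v = 1 := by
    show minkowski v ((sinh d)⁻¹ • (sinh t • X + sinh s • A)) = 1
    simp only [map_smul, map_add, smul_eq_mul, hvX, hvA]
    rw [inv_mul_eq_iff_eq_mul₀ hS.ne', ← hst, sinh_add]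
    ring
  have hv0 : 0 < v 0 := by
    have hv0_nonneg : 0 ≤ v 0 := by
      simp only [v, Pi.smul_apply, Pi.add_apply, smul_eq_mul]
      have := toHyperboloid_zero_pos x
      have := toHyperboloid_zero_pos a
      have := sinh_nonneg_iff.mpr hs
      have := sinh_nonneg_iff.mpr ht
      positivity
    rw [minkowski_apply] at hvv
    nlinarith [sq_nonneg (v 1), sq_nonneg (v 2)]
  obtain ⟨z, hz⟩ := exists_toHyperboloid_eq hvv hv0
  refine ⟨z, dist_eq_of_cosh_dist_eq hs ?_, dist_eq_of_cosh_dist_eq ht ?_, hz⟩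
  · rw [cosh_dist_eq_minkowski, hz, minkowski_comm, hvX]
  · rw [cosh_dist_eq_minkowski, hz, hvA]

lemma two_mul_cosh_dist_mul_minkowski_le {x a y b : ℍ} (heq : dist x a = dist y b)
    (hmin : ∀ l ∈ Set.Ico (0 : ℝ) 1, ∀ xl yl : ℍ,
      dist x xl = l * dist x a → dist xl a = (1 - l) * dist x a →
      dist y yl = l * dist y b → dist yl b = (1 - l) * dist y b → dist a b ≤ dist xl yl) :
    2 * cosh (dist x a) * minkowski (toHyperboloid a) (toHyperboloid b) ≤
      minkowski (toHyperboloid x) (toHyperboloid b)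
        + minkowski (toHyperboloid a) (toHyperboloid y) := by
  rcases eq_or_ne x a with rfl | hxa
  · obtain rfl : y = b := dist_eq_zero.mp (by rw [← heq, dist_self])
    rw [dist_self, cosh_zero]
    linarith
  have hyb : y ≠ b := dist_pos.mp (heq ▸ dist_pos.mpr hxa)
  refine two_mul_cosh_mul_le_of_forall_sinh_sq_mul_le
    (P := minkowski (toHyperboloid x) (toHyperboloid y)) (dist_pos.mpr hxa) fun l hl => ?_
  obtain ⟨xl, hx1, hx2, hX⟩ := exists_toHyperboloid_eq_geodesic hxa (Set.Ico_subset_Icc_self hl)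
  obtain ⟨yl, hy1, hy2, hY⟩ := exists_toHyperboloid_eq_geodesic hyb (Set.Ico_subset_Icc_self hl)
  have hcosh :=
    cosh_strictMonoOn.monotoneOn dist_nonneg dist_nonneg (hmin l hl xl yl hx1 hx2 hy1 hy2)
  rw [cosh_dist_eq_minkowski, cosh_dist_eq_minkowski, hX, hY, ← heq, ← sub_nonneg] at hcosh
  simp only [map_smul, map_add, LinearMap.smul_apply, LinearMap.add_apply, smul_eq_mul] at hcosh
  have hS : sinh (dist x a) ≠ 0 := (sinh_pos_iff.mpr (dist_pos.mpr hxa)).ne'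
  refine sub_nonneg.mp (le_of_le_of_eq (mul_nonneg (sq_nonneg (sinh (dist x a))) hcosh) ?_)
  field_simp
  ring

end UpperHalfPlane

/-- Case (ii) of the Appendix Proposition in the hyperbolic plane: if `a` is the midpoint of
`x` and `x'`, `b` is the midpoint of `y` and `y'`, `dist x a = dist y b`, and the distance
`dist a b` is minimal among distances between corresponding convex combinations
`(1-λ)x + λa` and `(1-λ)y + λb`, then `dist x' y' ≤ dist x y`. -/
theorem hyperbolic_appendix_case_ii
    (x x' y y' a b : UpperHalfPlane)
    (ha1 : dist x a = dist a x') (ha2 : dist a x' = (1 / 2) * dist x x')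
    (hb1 : dist y b = dist b y') (hb2 : dist b y' = (1 / 2) * dist y y')
    (heq : dist x a = dist y b)
    (hmin : ∀ lam ∈ Set.Icc (0 : ℝ) 1, ∀ xl yl : UpperHalfPlane,
      dist x xl = lam * dist x a → dist xl a = (1 - lam) * dist x a →
      dist y yl = lam * dist y b → dist yl b = (1 - lam) * dist y b →
      dist a b ≤ dist xl yl) :
    dist x' y' ≤ dist x y := by
  have hxx' : dist x x' = 2 * dist x a := by linarith
  have hyy' : dist y y' = 2 * dist y b := by linarith
  have key := two_mul_cosh_dist_mul_minkowski_le heq fun l hl ↦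
    hmin l (Set.Ico_subset_Icc_self hl)
  refine (cosh_strictMonoOn.le_iff_le dist_nonneg dist_nonneg).mp ?_
  rw [cosh_dist_eq_minkowski, cosh_dist_eq_minkowski, toHyperboloid_eq_of_midpoint ha1 hxx',
    toHyperboloid_eq_of_midpoint hb1 hyy', ← heq]
  simp only [map_sub, map_smul, LinearMap.sub_apply, LinearMap.smul_apply, smul_eq_mul]
  nlinarith [mul_nonneg (mul_nonneg zero_le_two (cosh_pos (dist x a)).le) (sub_nonneg.mpr key)]
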